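/- In the three-country icl=3 gadget construction, the Γ-cycles of (G,V) are exactly the following, for each triple t_i=(x,y,z) ∈ T: the seven length-3 international cycles ⟨x,a_i^1,a_i^2⟩, ⟨y,a_i^4,a_i^5⟩, ⟨z,a_i^7,a_i^8⟩, ⟨a_i^1,a_i^2,a_i^3⟩, ⟨a_i^4,a_i^5,a_i^6⟩, ⟨a_i^7,a_i^8,a_i^9⟩, and ⟨a_i^3,a_i^6,a_i^9⟩; in particular, every Γ-cycle is contained within a single gadget. -/

import Mathlib

open scoped Classical

/-- An `n`-partitioned compatibility graph: a finite directed graph on a finite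
set of natural-number vertices, without self-loops, whose vertex set is
partitioned into `n` nonempty countries. -/
structure PartGraph (n : ℕ) where
  verts : Finset ℕ
  arcs : Finset (ℕ × ℕ)
  arcs_mem : ∀ p ∈ arcs, p.1 ∈ verts ∧ p.2 ∈ verts
  no_loops : ∀ v, (v, v) ∉ arcs
  country : ℕ → Fin n
  country_nonempty : ∀ i : Fin n, ∃ v ∈ verts, country v = i

/-- Cyclic access to the entries of a list. -/
def cyc (l : List ℕ) (k : ℕ) : ℕ := l.getD (k % l.length) 0

/-- `l` is a (directed) cycle of `G`: a cyclic sequence of at least two distinct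
vertices, consecutive ones (cyclically) joined by arcs. -/
def IsCycle {n : ℕ} (G : PartGraph n) (l : List ℕ) : Prop :=
  2 ≤ l.length ∧ l.Nodup ∧ (∀ v ∈ l, v ∈ G.verts) ∧
    ∀ k < l.length, (cyc l k, cyc l (k + 1)) ∈ G.arcs

/-- All vertices of `l` belong to country `i`. -/
def IsNationalTo {n : ℕ} (G : PartGraph n) (l : List ℕ) (i : Fin n) : Prop :=
  ∀ v ∈ l, G.country v = i

/-- A national cycle: all vertices in one country. -/
def IsNational {n : ℕ} (G : PartGraph n) (l : List ℕ) : Prop :=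
  ∃ i, IsNationalTo G l i

/-- An international cycle: not national (equivalently, for cycles, it contains
an international arc). -/
def IsInternational {n : ℕ} (G : PartGraph n) (l : List ℕ) : Prop :=
  ¬ IsNational G l

/-- Position `k` (taken cyclically) is the start of a `V_i`-segment of `l`:
the vertex there is in country `i` but the cyclically preceding one is not. -/
def segStart {n : ℕ} (G : PartGraph n) (l : List ℕ) (i : Fin n) (k : ℕ) : Prop :=
  G.country (cyc l k) = i ∧ G.country (cyc l (k + l.length - 1)) ≠ i

/-- The size of the run of consecutive (cyclic) positions of `l`, starting at
position `k`, whose vertices are in country `i`.  At a segment start this is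
exactly the size of that `V_i`-segment. -/
noncomputable def runLen {n : ℕ} (G : PartGraph n) (l : List ℕ) (i : Fin n) (k : ℕ) : ℕ :=
  ((Finset.range l.length).filter
    fun j => ∀ j' ≤ j, G.country (cyc l (k + j')) = i).card

/-- The number of `V_i`-segments of the cycle `l`. -/
noncomputable def numSegs {n : ℕ} (G : PartGraph n) (l : List ℕ) (i : Fin n) : ℕ :=
  ((Finset.range l.length).filter fun k => segStart G l i k).card

/-- A set `Γ` of country-specific parameters for `n` countries. -/
structure Params (n : ℕ) where
  icl : ℕ∞
  ncl : Fin n → ℕ∞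
  iss : Fin n → ℕ∞
  isn : Fin n → ℕ∞
  icl_ne_one : icl ≠ 1
  ncl_ne_one : ∀ i, ncl i ≠ 1
  iss_pos : ∀ i, 1 ≤ iss i
  isn_pos : ∀ i, 1 ≤ isn i

/-- `l` is a `Γ`-cycle of `(G, 𝒱)`. -/
def IsGammaCycle {n : ℕ} (G : PartGraph n) (Γ : Params n) (l : List ℕ) : Prop :=
  IsCycle G l ∧
    ((∃ i, IsNationalTo G l i ∧ (l.length : ℕ∞) ≤ Γ.ncl i) ∨
      (IsInternational G l ∧ (l.length : ℕ∞) ≤ Γ.icl ∧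
        (∀ i, ∀ k < l.length, segStart G l i k → (runLen G l i k : ℕ∞) ≤ Γ.iss i) ∧
        (∀ i, (numSegs G l i : ℕ∞) ≤ Γ.isn i)))

/-- A cycle packing of `G`: a set of pairwise vertex-disjoint cycles. -/
def IsPacking {n : ℕ} (G : PartGraph n) (P : Finset (List ℕ)) : Prop :=
  (∀ l ∈ P, IsCycle G l) ∧
    ∀ l ∈ P, ∀ l' ∈ P, l ≠ l' → ∀ v ∈ l, v ∉ l'

/-- The size of a cycle packing: total number of arcs (= vertices) of its cycles. -/
def packSize (P : Finset (List ℕ)) : ℕ := ∑ l ∈ P, l.length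

/-- A `Γ`-cycle packing of `(G, 𝒱)`. -/
def IsGammaPackingG {n : ℕ} (G : PartGraph n) (Γ : Params n) (P : Finset (List ℕ)) : Prop :=
  IsPacking G P ∧ ∀ l ∈ P, IsGammaCycle G Γ l


/-- The arcs of the three-country `icl = 3` gadget associated with a triple
`t = (x,y,z)`; `a t 0, …, a t 8` are the fresh vertices `a_i^1, …, a_i^9`. -/
def gadgetArcs3 (a : ℕ × ℕ × ℕ → Fin 9 → ℕ) (t : ℕ × ℕ × ℕ) : Finset (ℕ × ℕ) :=
  [(t.1, a t 0), (a t 0, a t 1), (a t 1, t.1), (a t 1, a t 2), (a t 2, a t 0),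
   (t.2.1, a t 3), (a t 3, a t 4), (a t 4, t.2.1), (a t 4, a t 5), (a t 5, a t 3),
   (t.2.2, a t 6), (a t 6, a t 7), (a t 7, t.2.2), (a t 7, a t 8), (a t 8, a t 6),
   (a t 2, a t 5), (a t 5, a t 8), (a t 8, a t 2)].toFinset

/-- The parameters `Γ = (3, 3, (0,0,0), (1,1,1), (1,1,1))`. -/
def gadgetParams3 : Params 3 where
  icl := 3
  ncl := fun _ => 0
  iss := fun _ => 1
  isn := fun _ => 1
  icl_ne_one := by norm_num
  ncl_ne_one := by intro i; norm_num
  iss_pos := fun _ => le_refl _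
  isn_pos := fun _ => le_refl _

/-!
Every arc of `G` lies in a copy of one fixed 12-vertex gadget, and two copies meet only in
vertices of `X ∪ Y ∪ Z`, no two of which are adjacent. With `Γ` there are no national
`Γ`-cycles and no international ones longer than 3, and a cycle of length 2 or 3 cannot leave a
copy: each of its vertices outside `X ∪ Y ∪ Z` forces its two arcs into the same copy. A finite
check shows that the gadget has no 2-cycles and exactly seven triangles, each meeting all
three countries; a cycle through three different countries has all its segments of size 1.
-/

section Cycles

variable {n : ℕ} {G : PartGraph n} {l : List ℕ}

theorem cyc_eq_getElem (hl : l ≠ []) (k : ℕ) :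
    cyc l k = l[k % l.length]'(Nat.mod_lt _ (List.length_pos_iff.2 hl)) :=
  List.getD_eq_getElem ..

theorem mod_eq_of_country_cyc_eq (h : (l.map G.country).Nodup) (hl : l ≠ []) {j k : ℕ}
    (hjk : G.country (cyc l j) = G.country (cyc l k)) : j % l.length = k % l.length := by
  have hpos := List.length_pos_iff.2 hl
  rw [cyc_eq_getElem hl, cyc_eq_getElem hl] at hjk
  exact (h.getElem_inj_iff (i := j % l.length) (j := k % l.length)
    (hi := by simpa using Nat.mod_lt _ hpos) (hj := by simpa using Nat.mod_lt _ hpos)).1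
    (by simpa using hjk)

theorem runLen_le_one (h : (l.map G.country).Nodup) (hl : 2 ≤ l.length) (i : Fin n) (k : ℕ) :
    runLen G l i k ≤ 1 := by
  have hne : l ≠ [] := by rintro rfl; simp at hl
  refine Finset.card_le_one.2 fun j hj j' hj' => ?_
  suffices ∀ j ∈ (Finset.range l.length).filter
      (fun j => ∀ j' ≤ j, G.country (cyc l (k + j')) = i), j = 0 by
    rw [this j hj, this j' hj']
  intro j hj
  by_contra hj0
  simp only [Finset.mem_filter] at hj
  have hmod := mod_eq_of_country_cyc_eq h hne
    ((hj.2 0 (Nat.zero_le _)).trans (hj.2 1 (by omega)).symm)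
  have : l.length ∣ 1 := (Nat.modEq_iff_dvd' (by omega)).1 (Nat.ModEq.add_left_cancel' k hmod)
  exact absurd (Nat.le_of_dvd one_pos this) (by omega)

theorem numSegs_le_one (h : (l.map G.country).Nodup) (i : Fin n) : numSegs G l i ≤ 1 := by
  refine Finset.card_le_one.2 fun j hj k hk => ?_
  simp only [Finset.mem_filter, Finset.mem_range] at hj hk
  have hne : l ≠ [] := by rintro rfl; simp at hj
  have := mod_eq_of_country_cyc_eq h hne (hj.2.1.trans hk.2.1.symm)
  rwa [Nat.mod_eq_of_lt hj.1, Nat.mod_eq_of_lt hk.1] at this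

theorem isInternational_of_nodup_country (h : (l.map G.country).Nodup) (hl : 2 ≤ l.length) :
    IsInternational G l := by
  obtain ⟨u, v, r, rfl⟩ : ∃ u v r, l = u :: v :: r := by
    match l, hl with
    | u :: v :: r, _ => exact ⟨u, v, r, rfl⟩
  rintro ⟨i, hi⟩
  simp only [List.map_cons, List.nodup_cons, List.mem_cons] at h
  exact h.1 (Or.inl ((hi u (by simp)).trans (hi v (by simp)).symm))

theorem isGammaCycle_of_nodup_country {Γ : Params n} (hcyc : IsCycle G l)
    (h : (l.map G.country).Nodup) (hicl : (l.length : ℕ∞) ≤ Γ.icl) : IsGammaCycle G Γ l := by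
  refine ⟨hcyc, Or.inr ⟨isInternational_of_nodup_country h hcyc.1, hicl, ?_, ?_⟩⟩
  · intro i k _ _
    exact le_trans (by exact_mod_cast runLen_le_one h hcyc.1 i k) (Γ.iss_pos i)
  · intro i
    exact le_trans (by exact_mod_cast numSegs_le_one h i) (Γ.isn_pos i)

theorem IsGammaCycle.length_le_icl {Γ : Params n} (hncl : ∀ i, Γ.ncl i ≤ Γ.icl)
    (h : IsGammaCycle G Γ l) : (l.length : ℕ∞) ≤ Γ.icl := by
  obtain ⟨-, ⟨i, -, hi⟩ | ⟨-, hi, -⟩⟩ := h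
  exacts [hi.trans (hncl i), hi]

theorem IsCycle.arcs_of_pair {p q : ℕ} (h : IsCycle G [p, q]) :
    (p, q) ∈ G.arcs ∧ (q, p) ∈ G.arcs :=
  ⟨h.2.2.2 0 (by simp), by simpa [cyc] using h.2.2.2 1 (by simp)⟩

theorem IsCycle.arcs_of_triple {p q r : ℕ} (h : IsCycle G [p, q, r]) :
    (p, q) ∈ G.arcs ∧ (q, r) ∈ G.arcs ∧ (r, p) ∈ G.arcs :=
  ⟨h.2.2.2 0 (by simp), h.2.2.2 1 (by simp), by simpa [cyc] using h.2.2.2 2 (by simp)⟩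

theorem isCycle_triple {p q r : ℕ} (hpq : (p, q) ∈ G.arcs) (hqr : (q, r) ∈ G.arcs)
    (hrp : (r, p) ∈ G.arcs) (hnd : [p, q, r].Nodup) : IsCycle G [p, q, r] := by
  refine ⟨by simp, hnd, ?_, ?_⟩
  · simp only [List.mem_cons, List.not_mem_nil, or_false]
    rintro v (rfl | rfl | rfl)
    exacts [(G.arcs_mem _ hpq).1, (G.arcs_mem _ hqr).1, (G.arcs_mem _ hrp).1]
  · intro k hk
    simp only [List.length_cons, List.length_nil] at hk
    interval_cases k <;> simpa [cyc]

theorem isGammaCycle_triple {Γ : Params n} {p q r : ℕ}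
    (hpq : (p, q) ∈ G.arcs) (hqr : (q, r) ∈ G.arcs) (hrp : (r, p) ∈ G.arcs)
    (hcountry : ([p, q, r].map G.country).Nodup) (hicl : 3 ≤ Γ.icl) :
    IsGammaCycle G Γ [p, q, r] :=
  isGammaCycle_of_nodup_country (isCycle_triple hpq hqr hrp hcountry.of_map) hcountry
    (by simpa using hicl)

end Cycles

section Gluing

variable {V ι : Type*} (H : V → V → Prop) (T : Set ι) (emb : ι → V → ℕ)

def GluedArc (p q : ℕ) : Prop :=
  ∃ t ∈ T, ∃ u v, H u v ∧ emb t u = p ∧ emb t v = q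

def IsGluingAlong (port : V → Prop) : Prop :=
  ∀ t ∈ T, ∀ t' ∈ T, ∀ u v, emb t u = emb t' v → u = v ∧ (port u ∨ t = t')

variable {H T emb} {port : V → Prop}

theorem GluedArc.exists_copy_of_digon (hglue : IsGluingAlong T emb port)
    (hport : ∀ u v, H u v → ¬ (port u ∧ port v)) {p q : ℕ}
    (hpq : GluedArc H T emb p q) (hqp : GluedArc H T emb q p) :
    ∃ t ∈ T, ∃ u v, H u v ∧ H v u := by
  obtain ⟨t, ht, u, v, huv, rfl, rfl⟩ := hpq
  obtain ⟨t', ht', v', u', hvu, hv, hu⟩ := hqp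
  obtain ⟨rfl, hup⟩ := hglue t ht t' ht' u u' hu.symm
  obtain ⟨rfl, hvp⟩ := hglue t ht t' ht' v v' hv.symm
  obtain rfl : t = t' := by
    have := hport u v huv
    grind
  exact ⟨t, ht, u, v, huv, hvu⟩

theorem GluedArc.exists_copy_of_triangle (hglue : IsGluingAlong T emb port)
    (hport : ∀ u v, H u v → ¬ (port u ∧ port v)) {p q r : ℕ}
    (hpq : GluedArc H T emb p q) (hqr : GluedArc H T emb q r) (hrp : GluedArc H T emb r p) :
    ∃ t ∈ T, ∃ u v w, H u v ∧ H v w ∧ H w u ∧ p = emb t u ∧ q = emb t v ∧ r = emb t w := by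
  obtain ⟨t₁, ht₁, u, v, huv, rfl, rfl⟩ := hpq
  obtain ⟨t₂, ht₂, v', w, hvw, hv, rfl⟩ := hqr
  obtain ⟨t₃, ht₃, w', u', hwu, hw, hu⟩ := hrp
  obtain ⟨rfl, hvp⟩ := hglue t₁ ht₁ t₂ ht₂ v v' hv.symm
  obtain ⟨rfl, hwp⟩ := hglue t₂ ht₂ t₃ ht₃ w w' hw.symm
  obtain ⟨rfl, hup⟩ := hglue t₁ ht₁ t₃ ht₃ u u' hu.symm
  -- any two of `u, v, w` are adjacent, so at most one is a port, and each non-port forces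
  -- the copies of its two arcs to coincide
  obtain ⟨rfl, rfl⟩ : t₁ = t₂ ∧ t₂ = t₃ := by
    have := hport u v huv; have := hport v w hvw; have := hport w u hwu
    grind
  exact ⟨t₁, ht₁, u, v, w, huv, hvw, hwu, rfl, rfl, rfl⟩

theorem exists_copy_of_isGammaCycle {n : ℕ} {G : PartGraph n} {Γ : Params n}
    (harcs : ∀ p q, (p, q) ∈ G.arcs → GluedArc H T emb p q) (hglue : IsGluingAlong T emb port)
    (hport : ∀ u v, H u v → ¬ (port u ∧ port v)) (hasymm : ∀ u v, H u v → ¬ H v u)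
    (hncl : ∀ i, Γ.ncl i ≤ Γ.icl) (hicl : Γ.icl ≤ 3) {l : List ℕ} (hl : IsGammaCycle G Γ l) :
    ∃ t ∈ T, ∃ u v w, H u v ∧ H v w ∧ H w u ∧ l = [emb t u, emb t v, emb t w] := by
  have hlen : l.length ≤ 3 := by exact_mod_cast (hl.length_le_icl hncl).trans hicl
  rcases (by have := hl.1.1; omega : l.length = 2 ∨ l.length = 3) with h2 | h3
  · obtain ⟨p, q, rfl⟩ := List.length_eq_two.1 h2
    obtain ⟨hpq, hqp⟩ := hl.1.arcs_of_pair
    obtain ⟨t, -, u, v, huv, hvu⟩ :=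
      (harcs _ _ hpq).exists_copy_of_digon hglue hport (harcs _ _ hqp)
    exact absurd hvu (hasymm u v huv)
  · obtain ⟨p, q, r, rfl⟩ := List.length_eq_three.1 h3
    obtain ⟨hpq, hqr, hrp⟩ := hl.1.arcs_of_triple
    obtain ⟨t, ht, u, v, w, huv, hvw, hwu, rfl, rfl, rfl⟩ :=
      (harcs _ _ hpq).exists_copy_of_triangle hglue hport (harcs _ _ hqr) (harcs _ _ hrp)
    exact ⟨t, ht, u, v, w, huv, hvw, hwu, rfl⟩

end Gluing

/- `inl i` is the `i`-th coordinate of the triple `(x, y, z)` (a shared vertex) and `inr j` is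
the private vertex `a^(j+1)`. -/
abbrev GadgetNode := Fin 3 ⊕ Fin 9

def gadgetArcs : Finset (GadgetNode × GadgetNode) :=
  {(.inl 0, .inr 0), (.inr 0, .inr 1), (.inr 1, .inl 0), (.inr 1, .inr 2), (.inr 2, .inr 0),
   (.inl 1, .inr 3), (.inr 3, .inr 4), (.inr 4, .inl 1), (.inr 4, .inr 5), (.inr 5, .inr 3),
   (.inl 2, .inr 6), (.inr 6, .inr 7), (.inr 7, .inl 2), (.inr 7, .inr 8), (.inr 8, .inr 6),
   (.inr 2, .inr 5), (.inr 5, .inr 8), (.inr 8, .inr 2)}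

def gadgetCountry : GadgetNode → Fin 3 := Sum.elim id ![2, 1, 0, 0, 2, 1, 0, 1, 2]

def gadgetTriangles : List (List GadgetNode) :=
  [[.inl 0, .inr 0, .inr 1], [.inl 1, .inr 3, .inr 4], [.inl 2, .inr 6, .inr 7],
   [.inr 0, .inr 1, .inr 2], [.inr 3, .inr 4, .inr 5], [.inr 6, .inr 7, .inr 8],
   [.inr 2, .inr 5, .inr 8]]

theorem gadgetArcs_not_isLeft :
    ∀ u v, (u, v) ∈ gadgetArcs → ¬ (u.isLeft ∧ v.isLeft) := by
  decide

theorem gadgetArcs_asymm : ∀ u v, (u, v) ∈ gadgetArcs → (v, u) ∉ gadgetArcs := by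
  decide

-- the default instance-size limit makes `decide` fall back to `Classical.propDecidable`
set_option synthInstance.maxSize 2000 in
theorem gadgetArcs_triangle_iff : ∀ u v w,
    (u, v) ∈ gadgetArcs ∧ (v, w) ∈ gadgetArcs ∧ (w, u) ∈ gadgetArcs ↔
      ∃ c ∈ gadgetTriangles, [u, v, w] ~r c := by
  decide

set_option synthInstance.maxSize 2000 in
theorem gadgetCountry_nodup_of_triangle : ∀ u v w, (u, v) ∈ gadgetArcs →
    (v, w) ∈ gadgetArcs → (w, u) ∈ gadgetArcs → ([u, v, w].map gadgetCountry).Nodup := by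
  decide

theorem length_of_mem_gadgetTriangles : ∀ c ∈ gadgetTriangles, c.length = 3 := by
  decide

theorem exists_gadgetTriangle_iff (l : List ℕ) (f : GadgetNode → ℕ) :
    (∃ c ∈ gadgetTriangles, l ~r c.map f) ↔ ∃ u v w, (u, v) ∈ gadgetArcs ∧
      (v, w) ∈ gadgetArcs ∧ (w, u) ∈ gadgetArcs ∧ l = [f u, f v, f w] := by
  constructor
  · rintro ⟨c, hc, hrot⟩
    obtain ⟨k, rfl⟩ := hrot.symm
    obtain ⟨u, v, w, huvw⟩ := List.length_eq_three.1
      ((List.length_rotate c k).trans (length_of_mem_gadgetTriangles c hc))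
    obtain ⟨huv, hvw, hwu⟩ :=
      (gadgetArcs_triangle_iff u v w).2 ⟨c, hc, List.IsRotated.symm ⟨k, huvw⟩⟩
    exact ⟨u, v, w, huv, hvw, hwu, by rw [← List.map_rotate, huvw]; rfl⟩
  · rintro ⟨u, v, w, huv, hvw, hwu, rfl⟩
    obtain ⟨c, hc, hrot⟩ := (gadgetArcs_triangle_iff u v w).1 ⟨huv, hvw, hwu⟩
    exact ⟨c, hc, hrot.map f⟩

def gadgetEmb (a : ℕ × ℕ × ℕ → Fin 9 → ℕ) (t : ℕ × ℕ × ℕ) : GadgetNode → ℕ :=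
  Sum.elim ![t.1, t.2.1, t.2.2] (a t)

theorem gadgetArcs3_eq_image (a : ℕ × ℕ × ℕ → Fin 9 → ℕ) (t : ℕ × ℕ × ℕ) :
    gadgetArcs3 a t = gadgetArcs.image (Prod.map (gadgetEmb a t) (gadgetEmb a t)) := by
  simp [gadgetArcs3, gadgetArcs, gadgetEmb]

section Construction

variable {X Y Z : Finset ℕ} {T : Finset (ℕ × ℕ × ℕ)} {a : ℕ × ℕ × ℕ → Fin 9 → ℕ}

theorem eq_of_mem_vec3 (hXY : Disjoint X Y) (hXZ : Disjoint X Z) (hYZ : Disjoint Y Z)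
    {v : ℕ} {i i' : Fin 3} (h : v ∈ ![X, Y, Z] i) (h' : v ∈ ![X, Y, Z] i') : i = i' := by
  fin_cases i <;> fin_cases i' <;> simp_all [Finset.disjoint_left]

theorem gadgetEmb_inl_mem (hTsub : ∀ t ∈ T, t.1 ∈ X ∧ t.2.1 ∈ Y ∧ t.2.2 ∈ Z)
    {t : ℕ × ℕ × ℕ} (ht : t ∈ T) (i : Fin 3) : gadgetEmb a t (.inl i) ∈ ![X, Y, Z] i := by
  fin_cases i <;> simp [gadgetEmb, hTsub t ht]

theorem gadgetEmb_inr_not_mem (hfresh : ∀ t ∈ T, ∀ j, a t j ∉ X ∪ Y ∪ Z)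
    {t : ℕ × ℕ × ℕ} (ht : t ∈ T) (j : Fin 9) (i : Fin 3) :
    gadgetEmb a t (.inr j) ∉ ![X, Y, Z] i := by
  have := hfresh t ht j
  fin_cases i <;> simp_all [gadgetEmb]

theorem gadgetEmb_mem_iff (hXY : Disjoint X Y) (hXZ : Disjoint X Z) (hYZ : Disjoint Y Z)
    (hTsub : ∀ t ∈ T, t.1 ∈ X ∧ t.2.1 ∈ Y ∧ t.2.2 ∈ Z)
    (hfresh : ∀ t ∈ T, ∀ j, a t j ∉ X ∪ Y ∪ Z) {t : ℕ × ℕ × ℕ} (ht : t ∈ T)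
    (u : GadgetNode) (i : Fin 3) : gadgetEmb a t u ∈ ![X, Y, Z] i ↔ u = .inl i := by
  rcases u with i' | j
  · refine ⟨fun h => ?_, fun h => h ▸ gadgetEmb_inl_mem hTsub ht i⟩
    rw [eq_of_mem_vec3 hXY hXZ hYZ (gadgetEmb_inl_mem hTsub ht i') h]
  · simpa using gadgetEmb_inr_not_mem hfresh ht j i

theorem isGluingAlong_gadgetEmb (hXY : Disjoint X Y) (hXZ : Disjoint X Z) (hYZ : Disjoint Y Z)
    (hTsub : ∀ t ∈ T, t.1 ∈ X ∧ t.2.1 ∈ Y ∧ t.2.2 ∈ Z)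
    (hfresh : ∀ t ∈ T, ∀ j, a t j ∉ X ∪ Y ∪ Z)
    (hainj : ∀ t ∈ T, ∀ t' ∈ T, ∀ j j', a t j = a t' j' → t = t' ∧ j = j') :
    IsGluingAlong (T : Set (ℕ × ℕ × ℕ)) (gadgetEmb a) (fun u => u.isLeft) := by
  intro t ht t' ht' u u' h
  rcases u' with i' | j'
  · have hu := gadgetEmb_mem_iff hXY hXZ hYZ hTsub hfresh ht u i'
    rw [h] at hu
    obtain rfl := hu.1 (gadgetEmb_inl_mem hTsub ht' i')
    simp
  · rcases u with i | j
    · exact absurd (h ▸ gadgetEmb_inl_mem hTsub ht i) (gadgetEmb_inr_not_mem hfresh ht' j' i)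
    · obtain ⟨rfl, rfl⟩ := hainj t ht t' ht' j j' h
      simp

theorem country_gadgetEmb (hXY : Disjoint X Y) (hXZ : Disjoint X Z) (hYZ : Disjoint Y Z)
    (hTsub : ∀ t ∈ T, t.1 ∈ X ∧ t.2.1 ∈ Y ∧ t.2.2 ∈ Z)
    (hfresh : ∀ t ∈ T, ∀ j, a t j ∉ X ∪ Y ∪ Z)
    (hainj : ∀ t ∈ T, ∀ t' ∈ T, ∀ j j', a t j = a t' j' → t = t' ∧ j = j')
    {G : PartGraph 3}
    (hcountry : ∀ v, G.country v =
      if v ∈ Y ∨ ∃ t ∈ T, v = a t 1 ∨ v = a t 5 ∨ v = a t 7 then 1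
      else if v ∈ Z ∨ ∃ t ∈ T, v = a t 0 ∨ v = a t 4 ∨ v = a t 8 then 2
      else 0)
    {t : ℕ × ℕ × ℕ} (ht : t ∈ T) (u : GadgetNode) :
    G.country (gadgetEmb a t u) = gadgetCountry u := by
  have hY := gadgetEmb_mem_iff hXY hXZ hYZ hTsub hfresh ht u 1
  have hZ := gadgetEmb_mem_iff hXY hXZ hYZ hTsub hfresh ht u 2
  have hA : ∀ k, (∃ t' ∈ T, gadgetEmb a t u = a t' k) ↔ u = .inr k := fun k =>
    ⟨fun ⟨t', ht', h⟩ => (isGluingAlong_gadgetEmb hXY hXZ hYZ hTsub hfresh hainj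
      t ht t' ht' u (.inr k) h).1, by rintro rfl; exact ⟨t, ht, rfl⟩⟩
  simp only [Matrix.cons_val] at hY hZ
  rw [hcountry]
  simp only [hY, hZ, and_or_left, exists_or, hA]
  clear hY hZ hA
  revert u
  decide

theorem mem_arcs_iff_gluedArc {G : PartGraph 3}
    (harcs : G.arcs = T.biUnion fun t => gadgetArcs3 a t) (p q : ℕ) :
    (p, q) ∈ G.arcs ↔
      GluedArc (fun u v => (u, v) ∈ gadgetArcs) (T : Set (ℕ × ℕ × ℕ)) (gadgetEmb a) p q := by
  simp [harcs, gadgetArcs3_eq_image, GluedArc]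

end Construction

theorem gadget3_gamma_cycles_general
    (X Y Z : Finset ℕ) (T : Finset (ℕ × ℕ × ℕ)) (a : ℕ × ℕ × ℕ → Fin 9 → ℕ)
    (hXY : Disjoint X Y) (hXZ : Disjoint X Z) (hYZ : Disjoint Y Z)
    (hTsub : ∀ t ∈ T, t.1 ∈ X ∧ t.2.1 ∈ Y ∧ t.2.2 ∈ Z)
    (hfresh : ∀ t ∈ T, ∀ j, a t j ∉ X ∪ Y ∪ Z)
    (hainj : ∀ t ∈ T, ∀ t' ∈ T, ∀ j j', a t j = a t' j' → t = t' ∧ j = j')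
    (G : PartGraph 3)
    (harcs : G.arcs = T.biUnion fun t => gadgetArcs3 a t)
    (hcountry : ∀ v, G.country v =
      if v ∈ Y ∨ ∃ t ∈ T, v = a t 1 ∨ v = a t 5 ∨ v = a t 7 then 1
      else if v ∈ Z ∨ ∃ t ∈ T, v = a t 0 ∨ v = a t 4 ∨ v = a t 8 then 2
      else 0) :
    ∀ l : List ℕ, IsGammaCycle G gadgetParams3 l ↔
      ∃ t ∈ T,
        l.IsRotated [t.1, a t 0, a t 1] ∨ l.IsRotated [t.2.1, a t 3, a t 4] ∨
        l.IsRotated [t.2.2, a t 6, a t 7] ∨ l.IsRotated [a t 0, a t 1, a t 2] ∨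
        l.IsRotated [a t 3, a t 4, a t 5] ∨ l.IsRotated [a t 6, a t 7, a t 8] ∨
        l.IsRotated [a t 2, a t 5, a t 8] := by
  intro l
  trans ∃ t ∈ T, ∃ c ∈ gadgetTriangles, l ~r c.map (gadgetEmb a t)
  swap
  · simp [gadgetTriangles, gadgetEmb]
  have harc := mem_arcs_iff_gluedArc harcs
  simp_rw [exists_gadgetTriangle_iff]
  constructor
  · exact exists_copy_of_isGammaCycle (fun p q => (harc p q).1)
      (isGluingAlong_gadgetEmb hXY hXZ hYZ hTsub hfresh hainj) gadgetArcs_not_isLeft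
      gadgetArcs_asymm (fun _ => bot_le) le_rfl
  · rintro ⟨t, ht, u, v, w, huv, hvw, hwu, rfl⟩
    have hcty := country_gadgetEmb hXY hXZ hYZ hTsub hfresh hainj hcountry ht
    refine isGammaCycle_triple ((harc _ _).2 ⟨t, ht, u, v, huv, rfl, rfl⟩)
      ((harc _ _).2 ⟨t, ht, v, w, hvw, rfl, rfl⟩) ((harc _ _).2 ⟨t, ht, w, u, hwu, rfl, rfl⟩)
      ?_ le_rfl
    simpa only [List.map_cons, List.map_nil, hcty] using
      gadgetCountry_nodup_of_triangle u v w huv hvw hwu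

/-- In the three-country `icl = 3` gadget construction, the
`Γ`-cycles of `(G, 𝒱)` are exactly, for each triple `tᵢ = (x,y,z) ∈ T`, the
seven length-3 international cycles `⟨x,aᵢ¹,aᵢ²⟩, ⟨y,aᵢ⁴,aᵢ⁵⟩, ⟨z,aᵢ⁷,aᵢ⁸⟩,
⟨aᵢ¹,aᵢ²,aᵢ³⟩, ⟨aᵢ⁴,aᵢ⁵,aᵢ⁶⟩, ⟨aᵢ⁷,aᵢ⁸,aᵢ⁹⟩, ⟨aᵢ³,aᵢ⁶,aᵢ⁹⟩` (cycles as lists up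
to rotation); in particular every `Γ`-cycle is contained within a single
gadget. -/
theorem gadget3_gamma_cycles
    (X Y Z : Finset ℕ) (T : Finset (ℕ × ℕ × ℕ)) (a : ℕ × ℕ × ℕ → Fin 9 → ℕ)
    (hX : X.Nonempty) (hY : Y.Nonempty) (hZ : Z.Nonempty)
    (hXY : Disjoint X Y) (hXZ : Disjoint X Z) (hYZ : Disjoint Y Z)
    (hT : T.Nonempty) (hTsub : ∀ t ∈ T, t.1 ∈ X ∧ t.2.1 ∈ Y ∧ t.2.2 ∈ Z)
    (hfresh : ∀ t ∈ T, ∀ j, a t j ∉ X ∪ Y ∪ Z)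
    (hainj : ∀ t ∈ T, ∀ t' ∈ T, ∀ j j', a t j = a t' j' → t = t' ∧ j = j')
    (G : PartGraph 3)
    (hverts : G.verts = (X ∪ Y ∪ Z) ∪ T.biUnion fun t => Finset.image (a t) Finset.univ)
    (harcs : G.arcs = T.biUnion fun t => gadgetArcs3 a t)
    (hcountry : ∀ v, G.country v =
      if v ∈ Y ∨ ∃ t ∈ T, v = a t 1 ∨ v = a t 5 ∨ v = a t 7 then 1
      else if v ∈ Z ∨ ∃ t ∈ T, v = a t 0 ∨ v = a t 4 ∨ v = a t 8 then 2
      else 0) :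
    ∀ l : List ℕ, IsGammaCycle G gadgetParams3 l ↔
      ∃ t ∈ T,
        l.IsRotated [t.1, a t 0, a t 1] ∨ l.IsRotated [t.2.1, a t 3, a t 4] ∨
        l.IsRotated [t.2.2, a t 6, a t 7] ∨ l.IsRotated [a t 0, a t 1, a t 2] ∨
        l.IsRotated [a t 3, a t 4, a t 5] ∨ l.IsRotated [a t 6, a t 7, a t 8] ∨
        l.IsRotated [a t 2, a t 5, a t 8] :=
  gadget3_gamma_cycles_general X Y Z T a hXY hXZ hYZ hTsub hfresh hainj G harcs hcountry
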